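/- The function ω(z) = 1/(e^z + 1) satisfies, for every z ∈ ℂ at which all terms are defined, the identity (ω(z)·ω(z+1) − 1)·(ω(z)·ω(z−1) − 1) + 2·S(ω,z) = P(ω(z))/Q(ω(z)), where P(w) = e·w⁴ + (e−1)²·w³ − (e²+1)·w² and Q(w) = −(e−1)²·w² + (e−1)²·w + e, with e = exp(1). -/

import Mathlib

/-! ω = (eᶻ + 1)⁻¹ solves the logistic equation ω' = ω² - ω. For a solution of any autonomous
equation f' = p(f) the derivatives are polynomials in f, and the Schwarzian works out to
p''(f) p(f) - p'(f)² / 2, which for p = X² - X is the constant -1/2. What remains is a rational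
identity in u = eᶻ and e, since ω(z ± 1) = (u e^{±1} + 1)⁻¹. The factorisation
Q(ω(z)) (u + 1)² = (u e + 1)(u + e) shows that Q(ω(z)) ≠ 0 excludes the poles of ω(z ± 1). -/

open Real

noncomputable section

/-- The Schwarzian derivative `S(f,z) = f'''/f' - (3/2) (f''/f')²`. -/
def schwarzian (f : ℂ → ℂ) (z : ℂ) : ℂ :=
  iteratedDeriv 3 f z / deriv f z - (3 / 2) * (iteratedDeriv 2 f z / deriv f z) ^ 2

/-- The numerator polynomial of Example `exm 6` of the paper, with `e = exp 1`. -/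
def P18 (w : ℂ) : ℂ :=
  ((Real.exp 1 : ℝ) : ℂ) * w ^ 4 + (((Real.exp 1 : ℝ) : ℂ) - 1) ^ 2 * w ^ 3
    - (((Real.exp 1 : ℝ) : ℂ) ^ 2 + 1) * w ^ 2

/-- The denominator polynomial of Example `exm 6` of the paper, with `e = exp 1`. -/
def Q18 (w : ℂ) : ℂ :=
  -(((Real.exp 1 : ℝ) : ℂ) - 1) ^ 2 * w ^ 2 + (((Real.exp 1 : ℝ) : ℂ) - 1) ^ 2 * w
    + ((Real.exp 1 : ℝ) : ℂ)

open Polynomial Filter Topology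

/-- The `n`-th derivative of a solution of the autonomous equation `f' = p(f)` is
`(autonomousDerivPoly p n)(f)`. -/
def autonomousDerivPoly {𝕜 : Type*} [CommSemiring 𝕜] (p : 𝕜[X]) : ℕ → 𝕜[X]
  | 0 => X
  | n + 1 => derivative (autonomousDerivPoly p n) * p

theorem iteratedDeriv_eventuallyEq_of_hasDerivAt_eval {𝕜 : Type*} [NontriviallyNormedField 𝕜]
    {f : 𝕜 → 𝕜} {p : 𝕜[X]} {z : 𝕜} (hf : ∀ᶠ w in 𝓝 z, HasDerivAt f (p.eval (f w)) w) (n : ℕ) :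
    iteratedDeriv n f =ᶠ[𝓝 z] fun w => (autonomousDerivPoly p n).eval (f w) := by
  induction n generalizing z with
  | zero => exact .of_eq (by ext w; simp [autonomousDerivPoly])
  | succ n ih =>
    filter_upwards [eventually_eventually_nhds.2 hf] with w hw
    rw [iteratedDeriv_succ, (ih hw).deriv_eq, autonomousDerivPoly, eval_mul]
    exact (((autonomousDerivPoly p n).hasDerivAt (f w)).comp w hw.self_of_nhds).deriv

theorem schwarzian_eq_of_hasDerivAt_eval {f : ℂ → ℂ} {p : ℂ[X]} {z : ℂ}
    (hf : ∀ᶠ w in 𝓝 z, HasDerivAt f (p.eval (f w)) w) (hp : p.eval (f z) ≠ 0) :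
    schwarzian f z = (derivative (derivative p)).eval (f z) * p.eval (f z)
      - (derivative p).eval (f z) ^ 2 / 2 := by
  have hD n := (iteratedDeriv_eventuallyEq_of_hasDerivAt_eval hf n).self_of_nhds
  rw [schwarzian, ← iteratedDeriv_one, hD 1, hD 2, hD 3]
  simp only [autonomousDerivPoly, derivative_mul, derivative_X, one_mul, eval_mul, eval_add]
  field_simp
  ring

theorem hasDerivAt_inv_exp_add_one {z : ℂ} (h : Complex.exp z + 1 ≠ 0) :
    HasDerivAt (fun w => (Complex.exp w + 1)⁻¹)
      ((Complex.exp z + 1)⁻¹ ^ 2 - (Complex.exp z + 1)⁻¹) z := by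
  refine (((Complex.hasDerivAt_exp z).add_const 1).inv h).congr_deriv ?_
  field_simp
  ring

theorem schwarzian_inv_exp_add_one {z : ℂ} (h : Complex.exp z + 1 ≠ 0) :
    schwarzian (fun w => (Complex.exp w + 1)⁻¹) z = -1 / 2 := by
  have hU : ∀ᶠ w in 𝓝 z, Complex.exp w + 1 ≠ 0 :=
    (Complex.continuous_exp.add continuous_const).continuousAt.eventually_ne h
  have hf : ∀ᶠ w in 𝓝 z, HasDerivAt (fun w => (Complex.exp w + 1)⁻¹)
      ((X ^ 2 - X : ℂ[X]).eval (Complex.exp w + 1)⁻¹) w := by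
    filter_upwards [hU] with w hw
    simpa using hasDerivAt_inv_exp_add_one hw
  have hp : (X ^ 2 - X : ℂ[X]).eval (Complex.exp z + 1)⁻¹ ≠ 0 := by
    have : (Complex.exp z + 1)⁻¹ ^ 2 - (Complex.exp z + 1)⁻¹
        = -Complex.exp z / (Complex.exp z + 1) ^ 2 := by
      field_simp
      ring
    rw [eval_sub, eval_pow, eval_X, this]
    exact div_ne_zero (neg_ne_zero.2 (Complex.exp_ne_zero z)) (pow_ne_zero 2 h)
  rw [schwarzian_eq_of_hasDerivAt_eval hf hp]
  simp only [derivative_sub, derivative_X_pow, derivative_X, derivative_mul, derivative_C,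
    derivative_one, eval_sub, eval_mul, eval_pow, eval_X, eval_C, eval_one, eval_add, eval_zero]
  ring

theorem Q18_inv_add_one {u : ℂ} (hu : u + 1 ≠ 0) :
    Q18 (u + 1)⁻¹
      = (u * ((Real.exp 1 : ℝ) : ℂ) + 1) * (u + ((Real.exp 1 : ℝ) : ℂ)) / (u + 1) ^ 2 := by
  rw [Q18]
  field_simp
  ring

theorem stmt_18_general (z : ℂ)
    (h1 : Complex.exp z + 1 ≠ 0)
    (h5 : Q18 ((Complex.exp z + 1)⁻¹) ≠ 0) :
    ((Complex.exp z + 1)⁻¹ * (Complex.exp (z + 1) + 1)⁻¹ - 1)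
        * ((Complex.exp z + 1)⁻¹ * (Complex.exp (z - 1) + 1)⁻¹ - 1)
        + 2 * schwarzian (fun w : ℂ => (Complex.exp w + 1)⁻¹) z
      = P18 ((Complex.exp z + 1)⁻¹) / Q18 ((Complex.exp z + 1)⁻¹) := by
  have hexp_add : Complex.exp (z + 1) = Complex.exp z * ((Real.exp 1 : ℝ) : ℂ) := by
    rw [Complex.exp_add, Complex.ofReal_exp, Complex.ofReal_one]
  have hexp_sub : Complex.exp (z - 1) = Complex.exp z / ((Real.exp 1 : ℝ) : ℂ) := by
    rw [Complex.exp_sub, Complex.ofReal_exp, Complex.ofReal_one]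
  have he0 : ((Real.exp 1 : ℝ) : ℂ) ≠ 0 := Complex.ofReal_ne_zero.2 (Real.exp_pos 1).ne'
  rw [Q18_inv_add_one h1] at h5 ⊢
  obtain ⟨hpole_add, hpole_sub⟩ := mul_ne_zero_iff.1 (div_ne_zero_iff.1 h5).1
  rw [schwarzian_inv_exp_add_one h1, hexp_add, hexp_sub, P18]
  generalize Complex.exp z = u at *
  generalize ((Real.exp 1 : ℝ) : ℂ) = e at *
  field_simp
  ring

/-- `ω(z) = 1/(eᶻ + 1)` satisfies
`(ω(z)ω(z+1) - 1)(ω(z)ω(z-1) - 1) + 2·S(ω,z) = P(ω(z))/Q(ω(z))`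
wherever all terms are defined. -/
theorem stmt_18 (z : ℂ)
    (h1 : Complex.exp z + 1 ≠ 0)
    (h2 : Complex.exp (z + 1) + 1 ≠ 0)
    (h3 : Complex.exp (z - 1) + 1 ≠ 0)
    (h4 : deriv (fun w : ℂ => (Complex.exp w + 1)⁻¹) z ≠ 0)
    (h5 : Q18 ((Complex.exp z + 1)⁻¹) ≠ 0) :
    ((Complex.exp z + 1)⁻¹ * (Complex.exp (z + 1) + 1)⁻¹ - 1)
        * ((Complex.exp z + 1)⁻¹ * (Complex.exp (z - 1) + 1)⁻¹ - 1)
        + 2 * schwarzian (fun w : ℂ => (Complex.exp w + 1)⁻¹) z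
      = P18 ((Complex.exp z + 1)⁻¹) / Q18 ((Complex.exp z + 1)⁻¹) :=
  stmt_18_general z h1 h5
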